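/- arXiv:math-ph/0509075 — 6 statements merged into one kernel-verified Lean document; each statement's English description precedes it below -/
import Mathlib

section
/- Let E = (E_λ)_{λ∈ℝ} be a bounded spectral family in a complete orthomodular lattice L and define f_E on dual ideals by f_E(J) := inf{λ ∈ ℝ : E_λ ∈ J}. Then for any family (J_j)_{j∈J} of dual ideals, f_E(⋂_j J_j) = sup_j f_E(J_j). -/
def IsDualIdeal {L : Type} [Lattice L] [OrderBot L] (J : Set L) : Prop :=
  J.Nonempty ∧ ⊥ ∉ J ∧ (∀ a ∈ J, ∀ b ∈ J, a ⊓ b ∈ J) ∧ (∀ a ∈ J, ∀ b : L, a ≤ b → b ∈ J)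

class Orthomodular (L : Type) [CompleteLattice L] where
  compl : L → L
  compl_compl : ∀ x : L, compl (compl x) = x
  compl_antitone : ∀ x y : L, x ≤ y → compl y ≤ compl x
  inf_compl_eq_bot : ∀ x : L, x ⊓ compl x = ⊥
  sup_compl_eq_top : ∀ x : L, x ⊔ compl x = ⊤
  orthomodular : ∀ x y : L, x ≤ y → y = x ⊔ (y ⊓ compl x)

/-- A bounded spectral family in a complete lattice: monotone, right-continuous,
eventually `⊥` to the left and eventually `⊤` to the right. -/
structure SpectralFamily (L : Type) [CompleteLattice L] where
  E : ℝ → L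
  mono : Monotone E
  rightCont : ∀ l : ℝ, E l = ⨅ (m : ℝ) (_ : l < m), E m
  bddBelow : ∃ l : ℝ, E l = ⊥
  bddAbove : ∃ l : ℝ, E l = ⊤

/-- The observable function of a bounded spectral family on dual ideals. -/
noncomputable def obsFun {L : Type} [CompleteLattice L] (E : SpectralFamily L)
    (J : Set L) : ℝ :=
  sInf {l : ℝ | E.E l ∈ J}

/-! The set of `λ` with `E_λ ∈ J` is an upper set of reals, bounded below because `⊥ ∉ J` and
containing any `λ` with `E_λ = ⊤`. For upper sets of reals, intersecting corresponds to taking the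
supremum of the infima: every point above that supremum lies in each of the sets. -/

theorem csInf_iInter_of_isUpperSet {α ι : Type*} [ConditionallyCompleteLinearOrder α]
    [DenselyOrdered α] [NoMaxOrder α] [Nonempty ι] {S : ι → Set α}
    (hup : ∀ i, IsUpperSet (S i)) (hbdd : ∀ i, BddBelow (S i)) (hne : (⋂ i, S i).Nonempty) :
    sInf (⋂ i, S i) = ⨆ i, sInf (S i) := by
  obtain ⟨x, hx⟩ := hne
  have hxS := Set.mem_iInter.1 hx
  have hbddAbove : BddAbove (Set.range fun i => sInf (S i)) :=
    ⟨x, Set.forall_mem_range.2 fun i => csInf_le (hbdd i) (hxS i)⟩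
  apply le_antisymm
  · have hIoi : Set.Ioi (⨆ i, sInf (S i)) ⊆ ⋂ i, S i := fun y hy => Set.mem_iInter.2 fun i => by
      obtain ⟨z, hz, hzy⟩ :=
        exists_lt_of_csInf_lt ⟨x, hxS i⟩ ((le_ciSup hbddAbove i).trans_lt hy)
      exact hup i hzy.le hz
    calc sInf (⋂ i, S i)
        ≤ sInf (Set.Ioi (⨆ i, sInf (S i))) :=
          csInf_le_csInf ((hbdd (Classical.arbitrary ι)).mono (Set.iInter_subset S _))
            Set.nonempty_Ioi hIoi
      _ = ⨆ i, sInf (S i) := csInf_Ioi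
  · exact ciSup_le fun i => csInf_le_csInf (hbdd i) ⟨x, hx⟩ (Set.iInter_subset S i)

namespace IsDualIdeal

variable {L : Type} [Lattice L] [OrderBot L] {J : Set L}

theorem bot_notMem (hJ : IsDualIdeal J) : ⊥ ∉ J := hJ.2.1

theorem isUpperSet (hJ : IsDualIdeal J) : IsUpperSet J := fun a b hab ha => hJ.2.2.2 a ha b hab

theorem top_mem [OrderTop L] (hJ : IsDualIdeal J) : ⊤ ∈ J :=
  let ⟨_, ha⟩ := hJ.1
  hJ.isUpperSet le_top ha

end IsDualIdeal

namespace SpectralFamily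

variable {L : Type} [CompleteLattice L] (E : SpectralFamily L) {J : Set L}

theorem bddBelow_preimage (hJ : ⊥ ∉ J) : BddBelow (E.E ⁻¹' J) := by
  obtain ⟨l₀, hl₀⟩ := E.bddBelow
  refine ⟨l₀, fun l hl => le_of_not_gt fun hlt => hJ ?_⟩
  have hbot : E.E l = ⊥ := le_bot_iff.1 (hl₀ ▸ E.mono hlt.le)
  exact hbot ▸ hl

theorem nonempty_iInter_preimage {ι : Type} {J : ι → Set L} (hJ : ∀ i, ⊤ ∈ J i) :
    (⋂ i, E.E ⁻¹' J i).Nonempty :=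
  let ⟨l₁, hl₁⟩ := E.bddAbove
  ⟨l₁, Set.mem_iInter.2 fun i => by simp only [Set.mem_preimage, hl₁, hJ i]⟩

end SpectralFamily

theorem stmt3_general {L : Type} [CompleteLattice L] (E : SpectralFamily L)
    {ι : Type} [Nonempty ι] (J : ι → Set L) (hJ : ∀ i, IsDualIdeal (J i)) :
    obsFun E (⋂ i, J i) = ⨆ i, obsFun E (J i) := by
  change sInf (E.E ⁻¹' ⋂ i, J i) = ⨆ i, sInf (E.E ⁻¹' J i)
  rw [Set.preimage_iInter]
  exact csInf_iInter_of_isUpperSet (fun i => (hJ i).isUpperSet.preimage E.mono)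
    (fun i => E.bddBelow_preimage (hJ i).bot_notMem)
    (E.nonempty_iInter_preimage fun i => (hJ i).top_mem)

theorem stmt3 {L : Type} [CompleteLattice L] [Orthomodular L] (E : SpectralFamily L)
    {ι : Type} [Nonempty ι] (J : ι → Set L) (hJ : ∀ i, IsDualIdeal (J i)) :
    obsFun E (⋂ i, J i) = ⨆ i, obsFun E (J i) :=
  stmt3_general E J hJ
end

section
/- Let E be a bounded spectral family in a complete orthomodular lattice L and f_E(J) := inf{λ : E_λ ∈ J} for dual ideals J. Then f_E is upper semicontinuous on D(L): for every dual ideal J₀ and ε > 0 there exists P ∈ J₀ such that for all dual ideals J containing P, f_E(J) < f_E(J₀) + ε. -/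
/-! Choose `l` with `E l ∈ J₀` and `l < f_E(J₀) + ε`, and take `P = E l`: any dual ideal `J ∋ P`
has `f_E(J) ≤ l`, the infimum being over a set bounded below because `E` is eventually `⊥`
and `⊥ ∉ J`. -/

theorem IsDualIdeal.top_mem_s4 {L : Type} [Lattice L] [BoundedOrder L] {J : Set L}
    (hJ : IsDualIdeal J) : ⊤ ∈ J :=
  let ⟨a, ha⟩ := hJ.1
  hJ.2.2.2 a ha ⊤ le_top

namespace SpectralFamily

variable {L : Type} [CompleteLattice L] (E : SpectralFamily L) {J : Set L}

theorem bddBelow_setOf_mem (hJ : ⊥ ∉ J) : BddBelow {l : ℝ | E.E l ∈ J} := by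
  obtain ⟨l₀, hl₀⟩ := E.bddBelow
  refine ⟨l₀, fun l hl => le_of_not_gt fun hlt => hJ ?_⟩
  rwa [← le_bot_iff.mp (hl₀ ▸ E.mono hlt.le)]

theorem nonempty_setOf_mem (hJ : ⊤ ∈ J) : {l : ℝ | E.E l ∈ J}.Nonempty :=
  let ⟨l, hl⟩ := E.bddAbove
  ⟨l, show E.E l ∈ J by rwa [hl]⟩

end SpectralFamily

theorem obsFun_le_of_mem {L : Type} [CompleteLattice L] (E : SpectralFamily L) {J : Set L}
    (hJ : ⊥ ∉ J) {l : ℝ} (hl : E.E l ∈ J) : obsFun E J ≤ l :=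
  csInf_le (E.bddBelow_setOf_mem hJ) hl

theorem stmt4_general {L : Type} [CompleteLattice L] (E : SpectralFamily L)
    (J₀ : Set L) (hJ₀ : IsDualIdeal J₀) (ε : ℝ) (hε : 0 < ε) :
    ∃ P ∈ J₀, ∀ J : Set L, IsDualIdeal J → P ∈ J → obsFun E J < obsFun E J₀ + ε := by
  obtain ⟨l, hlJ₀, hlt⟩ :=
    exists_lt_of_csInf_lt (E.nonempty_setOf_mem hJ₀.top_mem_s4) (lt_add_of_pos_right _ hε)
  exact ⟨E.E l, hlJ₀, fun J hJ hlJ => (obsFun_le_of_mem E hJ.2.1 hlJ).trans_lt hlt⟩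

/-- Upper semicontinuity of the observable function on the space of dual ideals. -/
theorem stmt4 {L : Type} [CompleteLattice L] [Orthomodular L] (E : SpectralFamily L)
    (J₀ : Set L) (hJ₀ : IsDualIdeal J₀) (ε : ℝ) (hε : 0 < ε) :
    ∃ P ∈ J₀, ∀ J : Set L, IsDualIdeal J → P ∈ J → obsFun E J < obsFun E J₀ + ε :=
  stmt4_general E J₀ hJ₀ ε hε
end

section
/- For a bounded spectral family E in a complete orthomodular lattice, on a principal dual ideal H_P the observable function satisfies f_E(H_P) = min{λ ∈ ℝ : E_λ ≥ P}; in particular the infimum is attained. -/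
namespace SpectralFamily

variable {L : Type} [CompleteLattice L] (E : SpectralFamily L)

theorem le_apply_of_forall_lt {P : L} {l : ℝ} (h : ∀ m, l < m → P ≤ E.E m) : P ≤ E.E l :=
  E.rightCont l ▸ le_iInf₂ h

theorem nonempty_setOf_le_apply (P : L) : {l : ℝ | P ≤ E.E l}.Nonempty := by
  obtain ⟨a, ha⟩ := E.bddAbove
  exact ⟨a, show P ≤ E.E a from ha ▸ le_top⟩

theorem bddBelow_setOf_le_apply {P : L} (hP : P ≠ ⊥) : BddBelow {l : ℝ | P ≤ E.E l} := by
  obtain ⟨b, hb⟩ := E.bddBelow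
  refine ⟨b, fun l hl => le_of_not_gt fun hlb => hP ?_⟩
  exact le_bot_iff.mp (hb ▸ hl.trans (E.mono hlb.le))

theorem isLeast_sInf_setOf_le_apply {P : L} (hP : P ≠ ⊥) :
    IsLeast {l : ℝ | P ≤ E.E l} (sInf {l : ℝ | P ≤ E.E l}) := by
  refine ⟨E.le_apply_of_forall_lt fun m hm => ?_,
    fun l hl => csInf_le (E.bddBelow_setOf_le_apply hP) hl⟩
  obtain ⟨l, hl, hlm⟩ := exists_lt_of_csInf_lt (E.nonempty_setOf_le_apply P) hm
  exact hl.trans (E.mono hlm.le)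

end SpectralFamily

theorem stmt6_general {L : Type} [CompleteLattice L] (E : SpectralFamily L)
    (P : L) (hP : P ≠ ⊥) :
    IsLeast {l : ℝ | P ≤ E.E l} (obsFun E {Q : L | P ≤ Q}) :=
  E.isLeast_sInf_setOf_le_apply hP

/-- On a principal dual ideal `H_P`, the observable function attains its infimum:
`f_E(H_P) = min {λ | P ≤ E_λ}`. -/
theorem stmt6 {L : Type} [CompleteLattice L] [Orthomodular L] (E : SpectralFamily L)
    (P : L) (hP : P ≠ ⊥) :
    IsLeast {l : ℝ | P ≤ E.E l} (obsFun E {Q : L | P ≤ Q}) :=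
  stmt6_general E P hP
end

section
/- Let A be a bounded self-adjoint operator on a complex Hilbert space H with spectral family (E_λ), and define f_A on quasipoints B of the projection lattice of L(H) by f_A(B) = inf{λ : E_λ ∈ B}. Then the image of f_A equals the spectrum of A. -/
/-- A dual ideal in the lattice of closed subspaces of a Hilbert space `H`
(equivalently, in the lattice of orthogonal projections on `H`). -/
def IsDualIdealOfClosed {H : Type} [NormedAddCommGroup H] [InnerProductSpace ℂ H]
    (J : Set (Submodule ℂ H)) : Prop :=
  J.Nonempty ∧ (∀ K ∈ J, IsClosed (K : Set H)) ∧ ⊥ ∉ J ∧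
    (∀ a ∈ J, ∀ b ∈ J, a ⊓ b ∈ J) ∧
    (∀ a ∈ J, ∀ b : Submodule ℂ H, IsClosed (b : Set H) → a ≤ b → b ∈ J)

/-- A quasipoint: a maximal dual ideal in the projection lattice of `L(H)`. -/
def IsQuasipointOfClosed {H : Type} [NormedAddCommGroup H] [InnerProductSpace ℂ H]
    (B : Set (Submodule ℂ H)) : Prop :=
  IsDualIdealOfClosed B ∧
    ∀ J : Set (Submodule ℂ H), IsDualIdealOfClosed J → B ⊆ J → J = B

section Aux
variable {H : Type} [NormedAddCommGroup H] [InnerProductSpace ℂ H]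

/-- Every dual ideal extends to a quasipoint. -/
lemma exists_quasipoint_extending (J : Set (Submodule ℂ H))
    (hJ : IsDualIdealOfClosed J) :
    ∃ B, IsQuasipointOfClosed B ∧ J ⊆ B := by
  have hz : ∀ c ⊆ {J' : Set (Submodule ℂ H) | IsDualIdealOfClosed J'},
      IsChain (· ⊆ ·) c → c.Nonempty →
      ∃ ub ∈ {J' : Set (Submodule ℂ H) | IsDualIdealOfClosed J'}, ∀ s ∈ c, s ⊆ ub := by
    rintro c hcS hchain ⟨c₀, hc₀⟩
    refine ⟨⋃₀ c, ⟨?_, ?_, ?_, ?_, ?_⟩, fun s hs => Set.subset_sUnion_of_mem hs⟩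
    · obtain ⟨a, ha⟩ := (hcS hc₀).1
      exact ⟨a, c₀, hc₀, ha⟩
    · rintro K ⟨t, ht, hKt⟩
      exact (hcS ht).2.1 K hKt
    · rintro ⟨t, ht, hbt⟩
      exact (hcS ht).2.2.1 hbt
    · rintro a ⟨t, ht, hat⟩ b ⟨u, hu, hbu⟩
      rcases hchain.total ht hu with h | h
      · exact ⟨u, hu, (hcS hu).2.2.2.1 a (h hat) b hbu⟩
      · exact ⟨t, ht, (hcS ht).2.2.2.1 a hat b (h hbu)⟩
    · rintro a ⟨t, ht, hat⟩ b hbcl hab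
      exact ⟨t, ht, (hcS ht).2.2.2.2 a hat b hbcl hab⟩
  obtain ⟨m, hJm, hmax⟩ := zorn_subset_nonempty _ hz J hJ
  exact ⟨m, ⟨hmax.1, fun J' hJ' hsub => subset_antisymm (hmax.2 hJ' hsub) hsub⟩, hJm⟩

variable [CompleteSpace H]

/-- If `K < L` with `K` closed, then `L ⊓ Kᗮ ≠ ⊥`. -/
lemma inf_orthogonal_ne_bot {K L : Submodule ℂ H} (hK : IsClosed (K : Set H))
    (h : K < L) : L ⊓ Kᗮ ≠ ⊥ := by
  haveI : CompleteSpace K := hK.completeSpace_coe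
  obtain ⟨v, hvL, hvK⟩ := SetLike.exists_of_lt h
  have hv : v ∈ K ⊔ Kᗮ := by
    rw [Submodule.sup_orthogonal_of_hasOrthogonalProjection]; trivial
  obtain ⟨y, hy, z, hz, rfl⟩ := Submodule.mem_sup.mp hv
  have hzL : z ∈ L := by
    have : (y + z) - y ∈ L := L.sub_mem hvL (h.le hy)
    simpa using this
  have hz0 : z ≠ 0 := by rintro rfl; simp at hvK; exact hvK hy
  intro hb
  have : z ∈ L ⊓ Kᗮ := ⟨hzL, hz⟩
  rw [hb] at this
  exact hz0 (Submodule.mem_bot ℂ |>.mp this)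

end Aux

/-- For a bounded selfadjoint operator `A` on a complex Hilbert space with spectral
family `E`, the image of the observable function `f_A(B) = inf {λ | E_λ ∈ B}` over
all quasipoints equals the spectrum of `A` (the set of `λ` on every neighbourhood
of which `E` is non-constant). -/
theorem stmt11 {H : Type} [NormedAddCommGroup H] [InnerProductSpace ℂ H]
    [CompleteSpace H]
    (A : H →L[ℂ] H) (hA : IsSelfAdjoint A)
    (E : ℝ → Submodule ℂ H)
    (hclosed : ∀ l : ℝ, IsClosed ((E l : Set H)))
    (hmono : Monotone E)
    (hrc : ∀ l : ℝ, E l = ⨅ (m : ℝ) (_ : l < m), E m)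
    (hbot : ∀ l : ℝ, l < -‖A‖ → E l = ⊥)
    (htop : ∀ l : ℝ, ‖A‖ ≤ l → E l = ⊤)
    (hsp : spectrum ℝ A =
      {l : ℝ | ∀ ε : ℝ, 0 < ε → ∃ m₁ m₂ : ℝ, |m₁ - l| < ε ∧ |m₂ - l| < ε ∧ E m₁ ≠ E m₂}) :
    {x : ℝ | ∃ B : Set (Submodule ℂ H), IsQuasipointOfClosed B ∧
        sInf {l : ℝ | E l ∈ B} = x} = spectrum ℝ A := by
  ext x
  simp only [Set.mem_setOf_eq]
  rw [hsp]
  constructor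
  · rintro ⟨B, ⟨⟨hBne, hBcl, hBbot, hBmeet, hBup⟩, _⟩, rfl⟩
    set S := {l : ℝ | E l ∈ B} with hS
    have hTop : (⊤ : Submodule ℂ H) ∈ B := by
      obtain ⟨a, ha⟩ := hBne
      exact hBup a ha ⊤ (by rw [Submodule.top_coe]; exact isClosed_univ) le_top
    have hSne : S.Nonempty := ⟨‖A‖, by
      simp only [hS, Set.mem_setOf_eq, htop ‖A‖ le_rfl]; exact hTop⟩
    have hSlb : ∀ l ∈ S, -‖A‖ ≤ l := by
      intro l hl
      by_contra h
      push_neg at h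
      rw [hS, Set.mem_setOf_eq, hbot l h] at hl
      exact hBbot hl
    have hbdd : BddBelow S := ⟨-‖A‖, hSlb⟩
    intro ε hε
    refine ⟨sInf S - ε/2, sInf S + ε/2, ?_, ?_, ?_⟩
    · rw [abs_lt]; constructor <;> linarith
    · rw [abs_lt]; constructor <;> linarith
    · have h2 : sInf S + ε/2 ∈ S := by
        obtain ⟨l, hl, hlt⟩ :=
          (csInf_lt_iff hbdd hSne).mp (by linarith : sInf S < sInf S + ε/2)
        exact hBup (E l) hl (E _) (hclosed _) (hmono hlt.le)
      have h1 : sInf S - ε/2 ∉ S := fun h => by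
        have := csInf_le hbdd h; linarith
      intro heq
      exact h1 (by rw [hS, Set.mem_setOf_eq, heq]; exact h2)
  · intro hx
    by_cases h1 : ∀ μ < x, E μ ≠ E x
    · -- E is strictly increasing from the left at x
      set J₀ : Set (Submodule ℂ H) :=
        {K | IsClosed (K : Set H) ∧ ∃ μ < x, E x ⊓ (E μ)ᗮ ≤ K} with hJ₀def
      have hgen : ∀ μ < x, E x ⊓ (E μ)ᗮ ≠ ⊥ := fun μ hμ =>
        inf_orthogonal_ne_bot (hclosed μ) (lt_of_le_of_ne (hmono hμ.le) (h1 μ hμ))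
      have hgenJ : ∀ μ < x, E x ⊓ (E μ)ᗮ ∈ J₀ := by
        intro μ hμ
        refine ⟨?_, μ, hμ, le_rfl⟩
        rw [Submodule.coe_inf]
        exact (hclosed x).inter (E μ).isClosed_orthogonal
      have hJ₀ : IsDualIdealOfClosed J₀ := by
        refine ⟨⟨E x, hclosed x, x - 1, by linarith, inf_le_left⟩,
          fun K hK => hK.1, ?_, ?_, ?_⟩
        · rintro ⟨_, μ, hμ, hle⟩
          exact hgen μ hμ (le_bot_iff.mp hle)
        · rintro a ⟨hca, μ₁, hμ₁, le₁⟩ b ⟨hcb, μ₂, hμ₂, le₂⟩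
          refine ⟨by rw [Submodule.coe_inf]; exact hca.inter hcb,
            max μ₁ μ₂, max_lt hμ₁ hμ₂, le_inf ?_ ?_⟩
          · exact le_trans (inf_le_inf_left _
              (Submodule.orthogonal_le (hmono (le_max_left _ _)))) le₁
          · exact le_trans (inf_le_inf_left _
              (Submodule.orthogonal_le (hmono (le_max_right _ _)))) le₂
        · rintro a ⟨hca, μ, hμ, hle⟩ b hbcl hab
          exact ⟨hbcl, μ, hμ, hle.trans hab⟩
      obtain ⟨B, hB, hJB⟩ := exists_quasipoint_extending J₀ hJ₀
      refine ⟨B, hB, ?_⟩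
      have hSeq : {l : ℝ | E l ∈ B} = Set.Ici x := by
        ext l
        simp only [Set.mem_setOf_eq, Set.mem_Ici]
        constructor
        · intro hl
          by_contra hlt
          push_neg at hlt
          have hg : E x ⊓ (E l)ᗮ ∈ B := hJB (hgenJ l hlt)
          have hm : E l ⊓ (E x ⊓ (E l)ᗮ) ∈ B := hB.1.2.2.2.1 _ hl _ hg
          have hzero : E l ⊓ (E x ⊓ (E l)ᗮ) = ⊥ := by
            rw [eq_bot_iff]
            calc E l ⊓ (E x ⊓ (E l)ᗮ) ≤ E l ⊓ (E l)ᗮ :=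
                  inf_le_inf_left _ inf_le_right
              _ = ⊥ := (Submodule.orthogonal_disjoint (E l)).eq_bot
          rw [hzero] at hm
          exact hB.1.2.2.1 hm
        · intro hl
          exact hB.1.2.2.2.2 (E x)
            (hJB ⟨hclosed x, x - 1, by linarith, inf_le_left⟩)
            (E l) (hclosed l) (hmono hl)
      rw [hSeq, csInf_Ici]
    · -- E is constant to the left of x, so strictly increasing on the right
      push_neg at h1
      obtain ⟨μ₀, hμ₀, hEμ₀⟩ := h1
      have hgt : ∀ m, x < m → E x < E m := by
        intro m hm
        set ε := min (x - μ₀) (m - x) with hεdef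
        have hεpos : 0 < ε := lt_min (by linarith) (by linarith)
        obtain ⟨m₁, m₂, hm₁, hm₂, hne⟩ := hx ε hεpos
        have key : ∃ k, |k - x| < ε ∧ E k ≠ E x := by
          by_cases h : E m₁ = E x
          · exact ⟨m₂, hm₂, fun hh => hne (h.trans hh.symm)⟩
          · exact ⟨m₁, hm₁, h⟩
        obtain ⟨k, hk, hkne⟩ := key
        rw [abs_lt] at hk
        have hε₁ : ε ≤ x - μ₀ := min_le_left _ _
        have hε₂ : ε ≤ m - x := min_le_right _ _
        have hkgt : x < k := by
          by_contra hkle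
          push_neg at hkle
          have hμk : μ₀ ≤ k := by linarith
          exact hkne (le_antisymm (hmono hkle)
            (hEμ₀ ▸ hmono hμk))
        have hkm : k ≤ m := by linarith
        have hxk : E x < E k := lt_of_le_of_ne (hmono hkgt.le) (Ne.symm hkne)
        exact lt_of_lt_of_le hxk (hmono hkm)
      set J₀ : Set (Submodule ℂ H) :=
        {K | IsClosed (K : Set H) ∧ ∃ m, x < m ∧ E m ⊓ (E x)ᗮ ≤ K} with hJ₀def
      have hgen : ∀ m, x < m → E m ⊓ (E x)ᗮ ≠ ⊥ := fun m hm =>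
        inf_orthogonal_ne_bot (hclosed x) (hgt m hm)
      have hgenJ : ∀ m, x < m → E m ⊓ (E x)ᗮ ∈ J₀ := by
        intro m hm
        refine ⟨?_, m, hm, le_rfl⟩
        rw [Submodule.coe_inf]
        exact (hclosed m).inter (E x).isClosed_orthogonal
      have hJ₀ : IsDualIdealOfClosed J₀ := by
        refine ⟨⟨E (x + 1), hclosed _, x + 1, by linarith, inf_le_left⟩,
          fun K hK => hK.1, ?_, ?_, ?_⟩
        · rintro ⟨_, m, hm, hle⟩
          exact hgen m hm (le_bot_iff.mp hle)
        · rintro a ⟨hca, m₁, hm₁, le₁⟩ b ⟨hcb, m₂, hm₂, le₂⟩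
          refine ⟨by rw [Submodule.coe_inf]; exact hca.inter hcb,
            min m₁ m₂, lt_min hm₁ hm₂, le_inf ?_ ?_⟩
          · exact le_trans (inf_le_inf_right _ (hmono (min_le_left _ _))) le₁
          · exact le_trans (inf_le_inf_right _ (hmono (min_le_right _ _))) le₂
        · rintro a ⟨hca, m, hm, hle⟩ b hbcl hab
          exact ⟨hbcl, m, hm, hle.trans hab⟩
      obtain ⟨B, hB, hJB⟩ := exists_quasipoint_extending J₀ hJ₀
      refine ⟨B, hB, ?_⟩
      have hSeq : {l : ℝ | E l ∈ B} = Set.Ioi x := by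
        ext l
        simp only [Set.mem_setOf_eq, Set.mem_Ioi]
        constructor
        · intro hl
          by_contra hle
          push_neg at hle
          have hg : E (x + 1) ⊓ (E x)ᗮ ∈ B := hJB (hgenJ (x + 1) (by linarith))
          have hm : E l ⊓ (E (x + 1) ⊓ (E x)ᗮ) ∈ B := hB.1.2.2.2.1 _ hl _ hg
          have hzero : E l ⊓ (E (x + 1) ⊓ (E x)ᗮ) = ⊥ := by
            rw [eq_bot_iff]
            calc E l ⊓ (E (x + 1) ⊓ (E x)ᗮ) ≤ E x ⊓ (E x)ᗮ :=
                  inf_le_inf (hmono hle) inf_le_right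
              _ = ⊥ := (Submodule.orthogonal_disjoint (E x)).eq_bot
          rw [hzero] at hm
          exact hB.1.2.2.1 hm
        · intro hl
          exact hB.1.2.2.2.2 _ (hJB (hgenJ l hl)) (E l) (hclosed l) inf_le_left
      rw [hSeq, csInf_Ioi]
end

section
/- Let r : P₀ → ℝ be a bounded function on the nonzero elements of a complete orthomodular lattice which is completely increasing, i.e. r(⋁_k P_k) = sup_k r(P_k) for every family (P_k) in P₀. Then the function f_r on dual ideals defined by f_r(J) := inf_{P∈J} r(P) satisfies f_r(⋂_k J_k) = sup_k f_r(J_k) for every family (J_k) of dual ideals. -/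
/-- The function `f_r(J) = inf_{P ∈ J} r(P)` induced by `r` on dual ideals. -/
noncomputable def inducedFun {L : Type} (r : L → ℝ) (J : Set L) : ℝ :=
  sInf {y : ℝ | ∃ P ∈ J, r P = y}

/-- If `r` is a bounded completely increasing function on the nonzero elements of a
complete orthomodular lattice, then `f_r` satisfies the intersection condition. -/
theorem stmt14 {L : Type} [CompleteLattice L] [Orthomodular L] (r : L → ℝ)
    (hbdd : ∃ C : ℝ, ∀ P : L, P ≠ ⊥ → |r P| ≤ C)
    (hci : ∀ (ι : Type) [Nonempty ι] (P : ι → L), (∀ k, P k ≠ ⊥) →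
      r (⨆ k, P k) = ⨆ k, r (P k)) :
    ∀ (κ : Type) [Nonempty κ] (J : κ → Set L), (∀ k, IsDualIdeal (J k)) →
      inducedFun r (⋂ k, J k) = ⨆ k, inducedFun r (J k) := by
  intro κ _ J hJ
  obtain ⟨C, hC⟩ := hbdd
  -- basic facts
  have hk0 : ∃ k0 : κ, True := ⟨Classical.arbitrary κ, trivial⟩
  obtain ⟨k0, -⟩ := hk0
  have hne_bot : ∀ k, ∀ P ∈ J k, P ≠ ⊥ := by
    intro k P hP hPb
    exact (hJ k).2.1 (hPb ▸ hP)
  have htop_ne : (⊤ : L) ≠ ⊥ := by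
    obtain ⟨a, ha⟩ := (hJ k0).1
    intro h
    exact hne_bot k0 a ha (le_bot_iff.mp (h ▸ le_top))
  have htop : ∀ k, (⊤ : L) ∈ J k := fun k => by
    obtain ⟨a, ha⟩ := (hJ k).1
    exact (hJ k).2.2.2 a ha ⊤ le_top
  set S : κ → Set ℝ := fun k => {y : ℝ | ∃ P ∈ J k, r P = y} with hS
  set T : Set ℝ := {y : ℝ | ∃ P ∈ ⋂ k, J k, r P = y} with hT
  have hSne : ∀ k, (S k).Nonempty := fun k => ⟨r ⊤, ⊤, htop k, rfl⟩
  have hTne : T.Nonempty := ⟨r ⊤, ⊤, Set.mem_iInter.mpr htop, rfl⟩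
  have hSbdd : ∀ k, BddBelow (S k) := by
    intro k
    refine ⟨-C, ?_⟩
    rintro y ⟨P, hP, rfl⟩
    exact neg_le_of_abs_le (hC P (hne_bot k P hP))
  have hTbdd : BddBelow T := by
    refine ⟨-C, ?_⟩
    rintro y ⟨P, hP, rfl⟩
    exact neg_le_of_abs_le (hC P (hne_bot k0 P (Set.mem_iInter.mp hP k0)))
  have hfle : ∀ k, inducedFun r (J k) ≤ C := by
    intro k
    exact le_trans (csInf_le (hSbdd k) ⟨⊤, htop k, rfl⟩) (le_of_abs_le (hC ⊤ htop_ne))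
  have hfbdd : BddAbove (Set.range fun k => inducedFun r (J k)) := by
    refine ⟨C, ?_⟩
    rintro y ⟨k, rfl⟩
    exact hfle k
  apply le_antisymm
  · -- f(⋂) ≤ sup f(J k), via ε argument
    refine le_of_forall_pos_le_add ?_
    intro ε hε
    have hchoice : ∀ k, ∃ P ∈ J k, r P < inducedFun r (J k) + ε := by
      intro k
      have : sInf (S k) < inducedFun r (J k) + ε := by
        simp only [inducedFun]
        linarith
      obtain ⟨y, ⟨P, hP, rfl⟩, hy⟩ := exists_lt_of_csInf_lt (hSne k) this
      exact ⟨P, hP, hy⟩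
    choose P hP hPr using hchoice
    have hPne : ∀ k, P k ≠ ⊥ := fun k => hne_bot k (P k) (hP k)
    have hQmem : (⨆ k, P k) ∈ ⋂ k, J k := by
      refine Set.mem_iInter.mpr fun k => ?_
      exact (hJ k).2.2.2 (P k) (hP k) _ (le_iSup P k)
    have hrQ : r (⨆ k, P k) = ⨆ k, r (P k) := hci κ P hPne
    have h1 : inducedFun r (⋂ k, J k) ≤ r (⨆ k, P k) :=
      csInf_le hTbdd ⟨_, hQmem, rfl⟩
    have h2 : (⨆ k, r (P k)) ≤ ⨆ k, (inducedFun r (J k) + ε) := by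
      refine ciSup_mono ?_ fun k => (hPr k).le
      obtain ⟨B, hB⟩ := hfbdd
      refine ⟨B + ε, ?_⟩
      rintro y ⟨k, rfl⟩
      exact add_le_add (hB ⟨k, rfl⟩) le_rfl
    have h3 : (⨆ k, (inducedFun r (J k) + ε)) = (⨆ k, inducedFun r (J k)) + ε :=
      (ciSup_add hfbdd ε).symm
    calc inducedFun r (⋂ k, J k) ≤ r (⨆ k, P k) := h1
      _ = ⨆ k, r (P k) := hrQ
      _ ≤ ⨆ k, (inducedFun r (J k) + ε) := h2
      _ = (⨆ k, inducedFun r (J k)) + ε := h3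
  · -- sup f(J k) ≤ f(⋂), since T ⊆ S k
    refine ciSup_le fun k => ?_
    refine le_csInf hTne ?_
    rintro y ⟨Q, hQ, rfl⟩
    exact csInf_le (hSbdd k) ⟨Q, Set.mem_iInter.mp hQ k, rfl⟩
end

section
/- Let f : P₀(R) → ℝ be a function on nonzero projections of a von Neumann algebra R, and for λ ∈ ℝ set F_λ := f⁻¹((−∞, λ]) ∪ {0}. Then the following are equivalent: (i) f is completely increasing (f(⋁_a P_a) = sup_a f(P_a) for all families); (ii) f is strongly lower semicontinuous and f(P ∨ Q) = max(f(P), f(Q)) for all P, Q; (iii) for all λ ∈ ℝ, F_λ is a strongly closed ideal in the projection lattice P(R). -/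
open Filter Set Topology
set_option linter.unusedSectionVars false

section AuxStmt16

variable {L : Type} [CompleteLattice L] [TopologicalSpace L]

/-- Completely increasing. -/
private def CIfun (f : L → ℝ) : Prop :=
  ∀ (ι : Type) [Nonempty ι] (P : ι → L), (∀ k, P k ≠ ⊥) → f (⨆ k, P k) = ⨆ k, f (P k)

private def Sset (f : L → ℝ) (l : ℝ) : Set L := {P : L | P ≠ ⊥ ∧ f P ≤ l} ∪ {⊥}

private lemma bool_ciSup (h : Bool → ℝ) : (⨆ b, h b) = max (h true) (h false) := by
  apply le_antisymm
  · exact ciSup_le (fun b => by cases b <;> simp)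
  · exact max_le (le_ciSup (Set.finite_range h).bddAbove _)
      (le_ciSup (Set.finite_range h).bddAbove _)

private lemma ci_pairwise {f : L → ℝ} (h : CIfun f) {P Q : L} (hP : P ≠ ⊥) (hQ : Q ≠ ⊥) :
    f (P ⊔ Q) = max (f P) (f Q) := by
  have hh := h Bool (fun b => bif b then P else Q) (by intro b; cases b <;> simpa)
  have h1 : (⨆ b : Bool, (bif b then P else Q)) = P ⊔ Q := by
    rw [iSup_bool_eq]
    simp
  rw [h1] at hh
  rw [hh, bool_ciSup]
  simp

private lemma ci_mono {f : L → ℝ} (h : CIfun f) {P Q : L} (hP : P ≠ ⊥) (hQ : Q ≠ ⊥)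
    (hpq : P ≤ Q) : f P ≤ f Q := by
  have hh := ci_pairwise h hP hQ
  rw [sup_eq_right.2 hpq] at hh
  rw [hh]; exact le_max_left _ _

private lemma mem_Sset {f : L → ℝ} {l : ℝ} {P : L} (h0 : P ≠ ⊥) (hf : f P ≤ l) :
    P ∈ Sset f l := Or.inl ⟨h0, hf⟩

private lemma bot_mem_Sset {f : L → ℝ} {l : ℝ} : (⊥ : L) ∈ Sset f l := Or.inr rfl

private lemma Sset_down {f : L → ℝ} (h : CIfun f) {l : ℝ} :
    ∀ x ∈ Sset f l, ∀ y : L, y ≤ x → y ∈ Sset f l := by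
  rintro x hx y hyx
  by_cases hy0 : y = ⊥
  · exact hy0 ▸ bot_mem_Sset
  · rcases hx with ⟨hx0, hfx⟩ | hx
    · exact mem_Sset hy0 (le_trans (ci_mono h hy0 hx0 hyx) hfx)
    · exact absurd (le_bot_iff.1 (hx ▸ hyx)) hy0
  
private lemma Sset_join {f : L → ℝ} (h : CIfun f) {l : ℝ} :
    ∀ x ∈ Sset f l, ∀ y ∈ Sset f l, x ⊔ y ∈ Sset f l := by
  rintro x hx y hy
  by_cases hx0 : x = ⊥
  · simpa [hx0] using hy
  by_cases hy0 : y = ⊥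
  · simpa [hy0] using hx
  rcases hx with ⟨_, hfx⟩ | hx
  · rcases hy with ⟨_, hfy⟩ | hy
    · refine mem_Sset (fun hc => hx0 (le_bot_iff.1 (hc ▸ le_sup_left))) ?_
      rw [ci_pairwise h hx0 hy0]
      exact max_le hfx hfy
    · exact absurd hy hy0
  · exact absurd hx hx0

private lemma Sset_closed {f : L → ℝ} (hle : ∀ Q : L, IsClosed {P : L | P ≤ Q})
    (h : CIfun f) (l : ℝ) : IsClosed (Sset f l) := by
  by_cases hex : ∃ P : L, P ≠ ⊥ ∧ f P ≤ l
  · obtain ⟨P₀, hP₀⟩ := hex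
    haveI : Nonempty {P : L // P ≠ ⊥ ∧ f P ≤ l} := ⟨⟨P₀, hP₀⟩⟩
    set M := ⨆ x : {P : L // P ≠ ⊥ ∧ f P ≤ l}, (x : L) with hMdef
    have hM0 : M ≠ ⊥ := by
      intro hc
      exact hP₀.1 (le_bot_iff.1 (hc ▸ le_iSup (fun x : {P : L // P ≠ ⊥ ∧ f P ≤ l} => (x : L))
        ⟨P₀, hP₀⟩))
    have hfM : f M ≤ l := by
      rw [hMdef, h {P : L // P ≠ ⊥ ∧ f P ≤ l} (fun x => (x : L)) (fun x => x.2.1)]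
      exact ciSup_le fun x => x.2.2
    have hSeq : Sset f l = {Q : L | Q ≤ M} := by
      ext Q
      constructor
      · rintro (⟨hQ0, hfQ⟩ | hQ)
        · exact le_iSup (fun x : {P : L // P ≠ ⊥ ∧ f P ≤ l} => (x : L)) ⟨Q, hQ0, hfQ⟩
        · simp only [Set.mem_singleton_iff] at hQ
          simp [hQ]
      · intro hQ
        by_cases hQ0 : Q = ⊥
        · exact hQ0 ▸ bot_mem_Sset
        · exact mem_Sset hQ0 (le_trans (ci_mono h hQ0 hM0 hQ) hfM)
    rw [hSeq]
    exact hle M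
  · push_neg at hex
    have hSeq : Sset f l = {Q : L | Q ≤ ⊥} := by
      ext Q
      constructor
      · rintro (⟨hQ0, hfQ⟩ | hQ)
        · exact absurd hfQ (not_le.2 (hex Q hQ0))
        · simp only [Set.mem_singleton_iff] at hQ
          simp [hQ]
      · intro hQ
        have : Q = ⊥ := le_bot_iff.1 hQ
        exact this ▸ bot_mem_Sset
    rw [hSeq]
    exact hle ⊥

/-- (iii) → pairwise max. -/
private lemma iii_pairwise {f : L → ℝ}
    (hiii : ∀ l : ℝ, IsClosed (Sset f l) ∧
      (∀ x ∈ Sset f l, ∀ y : L, y ≤ x → y ∈ Sset f l) ∧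
      (∀ x ∈ Sset f l, ∀ y ∈ Sset f l, x ⊔ y ∈ Sset f l))
    {P Q : L} (hP : P ≠ ⊥) (hQ : Q ≠ ⊥) : f (P ⊔ Q) = max (f P) (f Q) := by
  have hPQ0 : P ⊔ Q ≠ ⊥ := fun hc => hP (le_bot_iff.1 (hc ▸ le_sup_left))
  apply le_antisymm
  · have hj := (hiii (max (f P) (f Q))).2.2 P (mem_Sset hP (le_max_left _ _))
      Q (mem_Sset hQ (le_max_right _ _))
    rcases hj with ⟨_, hfj⟩ | hj
    · exact hfj
    · exact absurd hj hPQ0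
  · have hd := (hiii (f (P ⊔ Q))).2.1 (P ⊔ Q) (mem_Sset hPQ0 le_rfl)
    refine max_le ?_ ?_
    · rcases hd P le_sup_left with ⟨_, hfP⟩ | hP'
      · exact hfP
      · exact absurd hP' hP
    · rcases hd Q le_sup_right with ⟨_, hfQ⟩ | hQ'
      · exact hfQ
      · exact absurd hQ' hQ

/-- (iii) → lower semicontinuity on nonzero elements. -/
private lemma iii_lsc {f : L → ℝ}
    (hiii : ∀ l : ℝ, IsClosed (Sset f l) ∧
      (∀ x ∈ Sset f l, ∀ y : L, y ≤ x → y ∈ Sset f l) ∧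
      (∀ x ∈ Sset f l, ∀ y ∈ Sset f l, x ⊔ y ∈ Sset f l)) :
    LowerSemicontinuous (fun P : {P : L // P ≠ ⊥} => f P.1) := by
  intro x c hc
  have hopen : IsOpen {P : {P : L // P ≠ ⊥} | c < f P.1} := by
    have heq : {P : {P : L // P ≠ ⊥} | c < f P.1}
        = (Subtype.val : {P : L // P ≠ ⊥} → L) ⁻¹' (Sset f c)ᶜ := by
      ext P
      simp only [Set.mem_setOf_eq, Set.mem_preimage, Set.mem_compl_iff, Sset,
        Set.mem_union, Set.mem_setOf_eq, Set.mem_singleton_iff, not_or, not_and]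
      constructor
      · intro h
        exact ⟨fun _ => not_le.2 h, P.2⟩
      · intro h
        exact not_le.1 (h.1 P.2)
    rw [heq]
    exact ((hiii c).1.isOpen_compl).preimage continuous_subtype_val
  exact hopen.mem_nhds hc

/-- (iii) → completely increasing. -/
private lemma iii_to_ci {f : L → ℝ}
    (hsup : ∀ (ι : Type) (P : ι → L),
      Filter.Tendsto (fun F : Finset ι => F.sup P) Filter.atTop (nhds (⨆ i, P i)))
    (hbdd : ∃ C : ℝ, ∀ P : L, P ≠ ⊥ → |f P| ≤ C)
    (hiii : ∀ l : ℝ, IsClosed (Sset f l) ∧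
      (∀ x ∈ Sset f l, ∀ y : L, y ≤ x → y ∈ Sset f l) ∧
      (∀ x ∈ Sset f l, ∀ y ∈ Sset f l, x ⊔ y ∈ Sset f l)) :
    CIfun f := by
  classical
  intro ι _ P hP
  obtain ⟨C, hC⟩ := hbdd
  have hbdda : BddAbove (Set.range fun k => f (P k)) := by
    refine ⟨C, ?_⟩
    rintro y ⟨k, rfl⟩
    exact (abs_le.1 (hC _ (hP k))).2
  set s := ⨆ k, f (P k) with hsdef
  set M := ⨆ k, P k with hMdef
  obtain ⟨k₀⟩ := ‹Nonempty ι›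
  have hM0 : M ≠ ⊥ := fun hc => hP k₀ (le_bot_iff.1 (hc ▸ le_iSup P k₀))
  have hfin : ∀ F : Finset ι, F.sup P ∈ Sset f s := by
    intro F
    induction F using Finset.induction_on with
    | empty => simpa using bot_mem_Sset
    | insert _ _ ha ih =>
        rw [Finset.sup_insert]
        exact (hiii s).2.2 _ (mem_Sset (hP _) (le_ciSup hbdda _)) _ ih
  have hMS : M ∈ Sset f s :=
    (hiii s).1.mem_of_tendsto (hsup ι P) (Filter.Eventually.of_forall hfin)
  rcases hMS with ⟨_, hfM⟩ | hMb
  · apply le_antisymm hfM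
    refine ciSup_le fun k => ?_
    have hd := (hiii (f M)).2.1 M (mem_Sset hM0 le_rfl) (P k) (le_iSup P k)
    rcases hd with ⟨_, hfPk⟩ | hb
    · exact hfPk
    · exact absurd hb (hP k)
  · exact absurd hMb hM0

/-- (ii) → completely increasing. -/
private lemma ii_to_ci {f : L → ℝ}
    (hsup : ∀ (ι : Type) (P : ι → L),
      Filter.Tendsto (fun F : Finset ι => F.sup P) Filter.atTop (nhds (⨆ i, P i)))
    (hbdd : ∃ C : ℝ, ∀ P : L, P ≠ ⊥ → |f P| ≤ C)
    (hlsc : LowerSemicontinuous (fun P : {P : L // P ≠ ⊥} => f P.1))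
    (hpair : ∀ P Q : L, P ≠ ⊥ → Q ≠ ⊥ → f (P ⊔ Q) = max (f P) (f Q)) :
    CIfun f := by
  classical
  intro ι _ P hP
  obtain ⟨C, hC⟩ := hbdd
  have hbdda : BddAbove (Set.range fun k => f (P k)) := by
    refine ⟨C, ?_⟩
    rintro y ⟨k, rfl⟩
    exact (abs_le.1 (hC _ (hP k))).2
  set s := ⨆ k, f (P k) with hsdef
  set M := ⨆ k, P k with hMdef
  obtain ⟨k₀⟩ := ‹Nonempty ι›
  have hM0 : M ≠ ⊥ := fun hc => hP k₀ (le_bot_iff.1 (hc ▸ le_iSup P k₀))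
  have hmono : ∀ k, f (P k) ≤ f M := by
    intro k
    have h := hpair (P k) M (hP k) hM0
    rw [sup_eq_right.2 (le_iSup P k)] at h
    rw [h]; exact le_max_left _ _
  apply le_antisymm
  · -- f M ≤ s, via lower semicontinuity along the net of finite sups
    by_contra hgt
    push_neg at hgt
    have hFsup : ∀ F : Finset ι, F.Nonempty → F.sup P ≠ ⊥ ∧ f (F.sup P) ≤ s := by
      intro F hF
      induction hF using Finset.Nonempty.cons_induction with
      | singleton a => simpa using ⟨hP a, le_ciSup hbdda a⟩
      | cons a F ha hF ih =>
          rw [Finset.sup_cons]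
          have h0 : F.sup P ≠ ⊥ := ih.1
          refine ⟨fun hc => hP a (le_bot_iff.1 (hc ▸ le_sup_left)), ?_⟩
          rw [hpair _ _ (hP a) h0]
          exact max_le (le_ciSup hbdda a) ih.2
    set g : Finset ι → L := fun F => (insert k₀ F).sup P with hgdef
    have hg0 : ∀ F, g F ≠ ⊥ := fun F =>
      (hFsup _ ⟨k₀, Finset.mem_insert_self _ _⟩).1
    have hgs : ∀ F, f (g F) ≤ s := fun F =>
      (hFsup _ ⟨k₀, Finset.mem_insert_self _ _⟩).2
    have hins : Filter.Tendsto (fun F : Finset ι => insert k₀ F) Filter.atTop Filter.atTop := by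
      refine Filter.tendsto_atTop_atTop.2 fun b => ⟨b, fun F hF => ?_⟩
      exact le_trans hF (Finset.subset_insert _ _)
    have htend : Filter.Tendsto g Filter.atTop (𝓝 M) := (hsup ι P).comp hins
    have htend' : Filter.Tendsto (fun F => (⟨g F, hg0 F⟩ : {P : L // P ≠ ⊥}))
        Filter.atTop (𝓝 (⟨M, hM0⟩ : {P : L // P ≠ ⊥})) := by
      rw [tendsto_subtype_rng]
      exact htend
    have hev := htend'.eventually (hlsc ⟨M, hM0⟩ s hgt)
    obtain ⟨F, hF⟩ := hev.exists
    exact absurd (hgs F) (not_le.2 hF)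
  · exact ciSup_le hmono

end AuxStmt16

/-- Characterization of completely increasing functions on the nonzero projections
of a von Neumann algebra. `L` is the projection lattice with its strong operator
topology; `hsup` expresses that arbitrary joins are strong limits of the increasing
net of finite joins, and `hle` that the sets `{P | P ≤ Q}` are strongly closed. -/
theorem stmt16 {L : Type} [CompleteLattice L] [TopologicalSpace L]
    (hsup : ∀ (ι : Type) (P : ι → L),
      Filter.Tendsto (fun F : Finset ι => F.sup P) Filter.atTop (nhds (⨆ i, P i)))
    (hle : ∀ Q : L, IsClosed {P : L | P ≤ Q})
    (f : L → ℝ) (hbdd : ∃ C : ℝ, ∀ P : L, P ≠ ⊥ → |f P| ≤ C) :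
    ((∀ (ι : Type) [Nonempty ι] (P : ι → L), (∀ k, P k ≠ ⊥) →
        f (⨆ k, P k) = ⨆ k, f (P k))
      ↔ (LowerSemicontinuous (fun P : {P : L // P ≠ ⊥} => f P.1) ∧
          ∀ P Q : L, P ≠ ⊥ → Q ≠ ⊥ → f (P ⊔ Q) = max (f P) (f Q))) ∧
    ((∀ (ι : Type) [Nonempty ι] (P : ι → L), (∀ k, P k ≠ ⊥) →
        f (⨆ k, P k) = ⨆ k, f (P k))
      ↔ (∀ l : ℝ, IsClosed ({P : L | P ≠ ⊥ ∧ f P ≤ l} ∪ {⊥}) ∧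
          (∀ x ∈ ({P : L | P ≠ ⊥ ∧ f P ≤ l} ∪ {⊥}), ∀ y : L, y ≤ x →
            y ∈ ({P : L | P ≠ ⊥ ∧ f P ≤ l} ∪ {⊥})) ∧
          (∀ x ∈ ({P : L | P ≠ ⊥ ∧ f P ≤ l} ∪ {⊥}),
            ∀ y ∈ ({P : L | P ≠ ⊥ ∧ f P ≤ l} ∪ {⊥}),
              x ⊔ y ∈ ({P : L | P ≠ ⊥ ∧ f P ≤ l} ∪ {⊥})))) := by
  have hci_iii : (CIfun f) ↔ (∀ l : ℝ, IsClosed (Sset f l) ∧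
      (∀ x ∈ Sset f l, ∀ y : L, y ≤ x → y ∈ Sset f l) ∧
      (∀ x ∈ Sset f l, ∀ y ∈ Sset f l, x ⊔ y ∈ Sset f l)) := by
    constructor
    · intro h l
      exact ⟨Sset_closed hle h l, Sset_down h, Sset_join h⟩
    · exact iii_to_ci hsup hbdd
  constructor
  · constructor
    · intro h
      have hiii := hci_iii.1 h
      exact ⟨iii_lsc hiii, fun P Q hP hQ => iii_pairwise hiii hP hQ⟩
    · intro ⟨hlsc, hpair⟩
      exact ii_to_ci hsup hbdd hlsc hpair
  · exact hci_iii
end
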